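/- arXiv:2308.10267 — 3 statements merged into one kernel-verified Lean document; each statement's English description precedes it below -/
import Mathlib

section
/- Let k and d be positive integers, let c₁, c₂ ∈ [0,1] be such that c₁·d < k, and set c₃ := c₁(1−c₂)/2. Let G be a finite graph on more than k vertices with maximum degree at most d such that every S ⊆ V(G) with |S| = k satisfies ∂_G(S) ≥ c₁·d·k. Then there exists a subset V' ⊆ V(G) with |V'| ≥ |V(G)| − k such that the induced subgraph G' = G[V'] satisfies: every nonempty S ⊆ V' with |S| ≤ c₃·k has ∂_{G'}(S) ≥ c₁·c₂·d·|S|. -/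
/-!
Delete badly expanding small sets one after another. The deleted set `B` stays sparse,
`∂B ≤ c₁ c₂ d |B|`, because `∂(B ∪ S) ≤ ∂B + ∂_{G - B}(S)`. A sparse set is far from size `k`:
padding `B` to a `k`-set `T` adds at most `d` boundary edges per vertex, so
`c₁ d k ≤ ∂T ≤ c₁ c₂ d |B| + d (k - |B|)`, which leaves room `k - |B| ≥ c₁ (1 - c₂) k` for the
next deleted set. Instead of iterating, take a largest sparse set of size at most `k`.
-/

open scoped Classical in
/-- The probability that the percolated random subgraph `G_p` satisfies property `A`. -/
noncomputable def percProb {V : Type} [Fintype V] (G : SimpleGraph V) (p : ℝ)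
    (A : SimpleGraph V → Prop) : ℝ :=
  ∑ F ∈ G.edgeFinset.powerset,
    if A (SimpleGraph.fromEdgeSet (F : Set (Sym2 V))) then
      p ^ F.card * (1 - p) ^ (G.edgeFinset.card - F.card)
    else 0

/-- The number of edges of `G` with exactly one endpoint in `S`. -/
noncomputable def edgeBoundary {V : Type} (G : SimpleGraph V) (S : Set V) : ℕ :=
  {e : Sym2 V | e ∈ G.edgeSet ∧ ∃ a b, e = s(a, b) ∧ a ∈ S ∧ b ∉ S}.ncard

section EdgeBoundary

variable {V : Type} (G : SimpleGraph V)

def edgeBoundaryIn (W S : Set V) : Set (Sym2 V) :=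
  {e | e ∈ G.edgeSet ∧ ∃ a b, e = s(a, b) ∧ a ∈ S ∧ b ∈ W \ S}

lemma edgeBoundary_eq_ncard_edgeBoundaryIn_univ (S : Set V) :
    edgeBoundary G S = (edgeBoundaryIn G Set.univ S).ncard := by
  simp [edgeBoundary, edgeBoundaryIn]

lemma edgeBoundary_induce (W : Set V) (S : Set W) :
    edgeBoundary (G.induce W) S = (edgeBoundaryIn G W (Subtype.val '' S)).ncard := by
  rw [edgeBoundary, ← Set.ncard_image_of_injective _ (Sym2.map.injective Subtype.val_injective)]
  congr 1
  ext e
  constructor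
  · rintro ⟨e', ⟨he', a, b, rfl, haS, hbS⟩, rfl⟩
    exact ⟨he', a, b, rfl, ⟨a, haS, rfl⟩, b.2,
      fun ⟨b', hb'S, hbb⟩ => hbS (Subtype.val_injective hbb ▸ hb'S)⟩
  · rintro ⟨he, a, b, rfl, ⟨a', ha'S, rfl⟩, hbW, hbS⟩
    exact ⟨s(a', ⟨b, hbW⟩), ⟨he, a', ⟨b, hbW⟩, rfl, ha'S, fun hb => hbS ⟨_, hb, rfl⟩⟩, rfl⟩

lemma edgeBoundaryIn_union_subset (W A S : Set V) :
    edgeBoundaryIn G W (A ∪ S) ⊆ edgeBoundaryIn G W A ∪ edgeBoundaryIn G (W \ A) S := by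
  rintro e ⟨he, a, b, rfl, ha | ha, hbW, hb⟩
  · exact Or.inl ⟨he, a, b, rfl, ha, hbW, fun h => hb (Or.inl h)⟩
  · exact Or.inr ⟨he, a, b, rfl, ha, ⟨hbW, fun h => hb (Or.inl h)⟩, fun h => hb (Or.inr h)⟩

lemma edgeBoundaryIn_mono {W W' : Set V} (hW : W ⊆ W') (S : Set V) :
    edgeBoundaryIn G W S ⊆ edgeBoundaryIn G W' S := by
  rintro e ⟨he, a, b, rfl, ha, hbW, hb⟩
  exact ⟨he, a, b, rfl, ha, hW hbW, hb⟩

lemma edgeBoundaryIn_subset_biUnion_incidenceSet (W S : Set V) :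
    edgeBoundaryIn G W S ⊆ ⋃ v ∈ S, G.incidenceSet v := by
  rintro e ⟨he, a, b, rfl, ha, -⟩
  exact Set.mem_biUnion ha ⟨he, Sym2.mem_mk_left a b⟩

variable [Finite V]

lemma edgeBoundary_union_le (A S : Set V) :
    edgeBoundary G (A ∪ S) ≤ edgeBoundary G A + edgeBoundary G S := by
  simp only [edgeBoundary_eq_ncard_edgeBoundaryIn_univ]
  calc (edgeBoundaryIn G Set.univ (A ∪ S)).ncard
      ≤ (edgeBoundaryIn G Set.univ A ∪ edgeBoundaryIn G (Set.univ \ A) S).ncard :=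
        Set.ncard_le_ncard (edgeBoundaryIn_union_subset G _ A S)
    _ ≤ _ := (Set.ncard_union_le _ _).trans (Nat.add_le_add_left
        (Set.ncard_le_ncard (edgeBoundaryIn_mono G Set.sdiff_subset S)) _)

lemma edgeBoundary_union_image_le (B : Set V) (S : Set ↥Bᶜ) :
    edgeBoundary G (B ∪ Subtype.val '' S) ≤ edgeBoundary G B + edgeBoundary (G.induce Bᶜ) S := by
  rw [edgeBoundary_eq_ncard_edgeBoundaryIn_univ, edgeBoundary_eq_ncard_edgeBoundaryIn_univ,
    edgeBoundary_induce]
  refine (Set.ncard_le_ncard ((edgeBoundaryIn_union_subset G _ B _).trans ?_)).trans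
    (Set.ncard_union_le _ _)
  rw [← Set.compl_eq_univ_sdiff]

lemma edgeBoundary_le_mul_ncard {d : ℕ} (hdeg : ∀ v : V, (G.neighborSet v).ncard ≤ d)
    (A : Set V) : edgeBoundary G A ≤ d * A.ncard := by
  classical
  have hinc (v : V) : (G.incidenceSet v).ncard ≤ d := by
    rw [← Nat.card_coe_set_eq, Nat.card_congr (G.incidenceSetEquivNeighborSet v),
      Nat.card_coe_set_eq]
    exact hdeg v
  have hA := A.toFinite
  rw [edgeBoundary_eq_ncard_edgeBoundaryIn_univ]
  calc (edgeBoundaryIn G Set.univ A).ncard ≤ (⋃ v ∈ A, G.incidenceSet v).ncard :=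
        Set.ncard_le_ncard (edgeBoundaryIn_subset_biUnion_incidenceSet G _ A)
    _ ≤ ∑ v ∈ hA.toFinset, (G.incidenceSet v).ncard := by
        simpa using hA.toFinset.set_ncard_biUnion_le G.incidenceSet
    _ ≤ ∑ _v ∈ hA.toFinset, d := Finset.sum_le_sum fun v _ => hinc v
    _ = d * A.ncard := by
        rw [Finset.sum_const, smul_eq_mul, mul_comm, Set.ncard_eq_toFinset_card A hA]

lemma exists_ncard_eq_edgeBoundary_le {d k : ℕ} (hdeg : ∀ v : V, (G.neighborSet v).ncard ≤ d)
    {B : Set V} (hBk : B.ncard ≤ k) (hk : k ≤ Nat.card V) :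
    ∃ T : Set V, T.ncard = k ∧ edgeBoundary G T ≤ edgeBoundary G B + d * (k - B.ncard) := by
  obtain ⟨T, hBT, -, hTk⟩ := Set.exists_subsuperset_card_eq (Set.subset_univ B) hBk
    (by rwa [Set.ncard_univ])
  refine ⟨T, hTk, ?_⟩
  have hdiff : (T \ B).ncard = k - B.ncard := by
    rw [← hTk, ← Set.ncard_sdiff_add_ncard_of_subset hBT, Nat.add_sub_cancel]
  calc edgeBoundary G T = edgeBoundary G (B ∪ T \ B) := by rw [Set.union_sdiff_cancel hBT]
    _ ≤ edgeBoundary G B + edgeBoundary G (T \ B) := edgeBoundary_union_le G _ _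
    _ ≤ edgeBoundary G B + d * (k - B.ncard) := by
        rw [← hdiff]; exact Nat.add_le_add_left (edgeBoundary_le_mul_ncard G hdeg _) _

end EdgeBoundary

section Expansion

variable {V : Type}

def IsSmallSetExpander (H : SimpleGraph V) (m c : ℝ) : Prop :=
  ∀ S : Set V, S.Nonempty → (S.ncard : ℝ) ≤ m → c * S.ncard ≤ edgeBoundary H S

variable [Finite V] (G : SimpleGraph V)

lemma ncard_add_mul_le_of_edgeBoundary_le {d k : ℕ} {α β : ℝ}
    (hdeg : ∀ v : V, (G.neighborSet v).ncard ≤ d) (hd : 0 < d) (hα : 0 ≤ α)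
    (hk : k ≤ Nat.card V) (hiso : ∀ T : Set V, T.ncard = k → β * d * k ≤ edgeBoundary G T)
    {B : Set V} (hBk : B.ncard ≤ k) (hB : (edgeBoundary G B : ℝ) ≤ α * d * B.ncard) :
    B.ncard + (β - α) * k ≤ k := by
  obtain ⟨T, hTk, hT⟩ := exists_ncard_eq_edgeBoundary_le G hdeg hBk hk
  have hTR : (edgeBoundary G T : ℝ) ≤ edgeBoundary G B + d * ((k : ℝ) - B.ncard) := by
    rw [← Nat.cast_sub hBk]; exact_mod_cast hT
  have hBkR : (B.ncard : ℝ) ≤ k := by exact_mod_cast hBk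
  have hdR : (0 : ℝ) < d := by exact_mod_cast hd
  have : d * (β * k) ≤ d * (α * B.ncard + (k - B.ncard)) := by
    linarith [hiso T hTk]
  linarith [le_of_mul_le_mul_left this hdR, mul_le_mul_of_nonneg_left hBkR hα]

theorem exists_ncard_le_isSmallSetExpander_induce_compl {d k : ℕ} {c₁ c₂ : ℝ}
    (hdeg : ∀ v : V, (G.neighborSet v).ncard ≤ d) (hc₁ : 0 ≤ c₁) (hc₂ : 0 ≤ c₂)
    (hk : k ≤ Nat.card V) (hiso : ∀ T : Set V, T.ncard = k → c₁ * d * k ≤ edgeBoundary G T) :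
    ∃ C : Set V, C.ncard ≤ k ∧
      IsSmallSetExpander (G.induce Cᶜ) (c₁ * (1 - c₂) / 2 * k) (c₁ * c₂ * d) := by
  set sparse := {B : Set V | B.ncard ≤ k ∧ (edgeBoundary G B : ℝ) ≤ c₁ * c₂ * d * B.ncard}
  obtain ⟨B, ⟨hBk, hB⟩, hmax⟩ :=
    sparse.exists_max_image Set.ncard (Set.toFinite _) ⟨∅, by simp, by simp [edgeBoundary]⟩
  refine ⟨B, hBk, fun S hSne hS => ?_⟩
  by_contra! hbad
  have hd : 0 < d := by
    by_contra! h
    simp only [Nat.le_zero.1 h, CharP.cast_eq_zero, mul_zero, zero_mul] at hbad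
    exact (Nat.cast_nonneg _).not_gt hbad
  have hroom := ncard_add_mul_le_of_edgeBoundary_le G hdeg hd (mul_nonneg hc₁ hc₂) hk hiso hBk hB
  have hdisj : Disjoint B (Subtype.val '' S) :=
    Set.disjoint_right.2 fun _ ⟨x, _, hx⟩ => hx ▸ x.2
  have hcard : (B ∪ Subtype.val '' S).ncard = B.ncard + S.ncard := by
    rw [Set.ncard_union_eq hdisj, Set.ncard_image_of_injective _ Subtype.val_injective]
  have hgrown : B ∪ Subtype.val '' S ∈ sparse := by
    refine ⟨?_, ?_⟩
    · have : ((B.ncard + S.ncard : ℕ) : ℝ) ≤ k := by push_cast; linarith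
      rw [hcard]; exact_mod_cast this
    · calc (edgeBoundary G (B ∪ Subtype.val '' S) : ℝ)
          ≤ edgeBoundary G B + edgeBoundary (G.induce Bᶜ) S := by
            exact_mod_cast edgeBoundary_union_image_le G B S
        _ ≤ c₁ * c₂ * d * (B ∪ Subtype.val '' S).ncard := by
            rw [hcard]; push_cast; linarith
  have := hmax _ hgrown
  have := (Set.ncard_pos (Set.toFinite S)).2 hSne
  omega

end Expansion

theorem local_to_global_expansion_general (k d : ℕ)
    (c₁ c₂ : ℝ) (hc₁0 : 0 ≤ c₁) (hc₂0 : 0 ≤ c₂)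
    (V : Type) [Fintype V] (G : SimpleGraph V)
    -- `G` has more than `k` vertices
    (hcard : k < Fintype.card V)
    -- maximum degree at most `d`
    (hdeg : ∀ v : V, (G.neighborSet v).ncard ≤ d)
    -- every `S` with `|S| = k` has `∂_G(S) ≥ c₁ d k`
    (hiso : ∀ S : Set V, S.ncard = k →
      c₁ * (d : ℝ) * (k : ℝ) ≤ (edgeBoundary G S : ℝ)) :
    ∃ V' : Set V, (Fintype.card V : ℝ) - (k : ℝ) ≤ (V'.ncard : ℝ) ∧
      ∀ S : Set V', S.Nonempty → (S.ncard : ℝ) ≤ c₁ * (1 - c₂) / 2 * (k : ℝ) →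
        c₁ * c₂ * (d : ℝ) * (S.ncard : ℝ) ≤ (edgeBoundary (G.induce V') S : ℝ) := by
  rw [← Nat.card_eq_fintype_card] at hcard ⊢
  obtain ⟨C, hCk, hC⟩ :=
    exists_ncard_le_isSmallSetExpander_induce_compl G hdeg hc₁0 hc₂0 hcard.le hiso
  refine ⟨Cᶜ, ?_, hC⟩
  have hsplit : (C.ncard + Cᶜ.ncard : ℕ) = (Nat.card V : ℝ) := by
    exact_mod_cast Set.ncard_add_ncard_compl C
  have hCkR : (C.ncard : ℝ) ≤ k := by exact_mod_cast hCk
  push_cast at hsplit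
  linarith

theorem local_to_global_expansion (k d : ℕ) (hk : 0 < k) (hd : 0 < d)
    (c₁ c₂ : ℝ) (hc₁0 : 0 ≤ c₁) (hc₁1 : c₁ ≤ 1) (hc₂0 : 0 ≤ c₂) (hc₂1 : c₂ ≤ 1)
    (hcd : c₁ * (d : ℝ) < (k : ℝ))
    (V : Type) [Fintype V] (G : SimpleGraph V)
    -- `G` has more than `k` vertices
    (hcard : k < Fintype.card V)
    -- maximum degree at most `d`
    (hdeg : ∀ v : V, (G.neighborSet v).ncard ≤ d)
    -- every `S` with `|S| = k` has `∂_G(S) ≥ c₁ d k`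
    (hiso : ∀ S : Set V, S.ncard = k →
      c₁ * (d : ℝ) * (k : ℝ) ≤ (edgeBoundary G S : ℝ)) :
    ∃ V' : Set V, (Fintype.card V : ℝ) - (k : ℝ) ≤ (V'.ncard : ℝ) ∧
      ∀ S : Set V', S.Nonempty → (S.ncard : ℝ) ≤ c₁ * (1 - c₂) / 2 * (k : ℝ) →
        c₁ * c₂ * (d : ℝ) * (S.ncard : ℝ) ≤ (edgeBoundary (G.induce V') S : ℝ) :=
  local_to_global_expansion_general k d c₁ c₂ hc₁0 hc₂0 V G hcard hdeg hiso
end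

section
/- There exists ε₀ > 0 such that for every ε ∈ (0, ε₀) there exists δ₀ > 0 such that for every δ ∈ (0, δ₀) there exists d₀ such that the following holds for every integer d ≥ d₀: if G is a d-regular graph, v ∈ V(G), and p satisfies (1+ε−2δ)/d ≤ p ≤ (1+ε)/d, then the probability that there exists a subset U of the neighbourhood of v in G with |U| ≤ δ²·d such that the union over u ∈ U of the connected components of u in the percolated random subgraph G_p has total order between δ·d and 2δ·d is at most exp(−δ²·d). -/
open Finset SimpleGraph
open scoped Classical

section EdgeSets

variable {V : Type*} [Fintype V] (G : SimpleGraph V)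

lemma fromEdgeSet_le_of_subset_edgeFinset {F : Finset (Sym2 V)} (hF : F ⊆ G.edgeFinset) :
    fromEdgeSet ↑F ≤ G :=
  (fromEdgeSet_le _).2 fun _ he => mem_edgeFinset.1 (hF he.1)

lemma edgeSet_fromEdgeSet_of_subset_edgeFinset {F : Finset (Sym2 V)} (hF : F ⊆ G.edgeFinset) :
    (fromEdgeSet (F : Set (Sym2 V))).edgeSet = ↑F := by
  rw [edgeSet_fromEdgeSet, sdiff_eq_left]
  exact Set.disjoint_left.2 fun e he => G.not_isDiag_of_mem_edgeSet (mem_edgeFinset.1 (hF he))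

end EdgeSets

section Percolation

variable {V : Type} [Fintype V] {G : SimpleGraph V} {p : ℝ}

def InCylinder (P B : Finset (Sym2 V)) (H : SimpleGraph V) : Prop :=
  ↑P ⊆ H.edgeSet ∧ Disjoint H.edgeSet ↑B

lemma pow_mul_one_sub_pow_nonneg (hp0 : 0 ≤ p) (hp1 : p ≤ 1) (m n : ℕ) :
    0 ≤ p ^ m * (1 - p) ^ n := by
  have : 0 ≤ 1 - p := by linarith
  positivity

lemma percProb_le_sum (hp0 : 0 ≤ p) (hp1 : p ≤ 1) {ι : Type*} (T : Finset ι)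
    {A : SimpleGraph V → Prop} {B : ι → SimpleGraph V → Prop}
    (h : ∀ H ≤ G, A H → ∃ t ∈ T, B t H) :
    percProb G p A ≤ ∑ t ∈ T, percProb G p (B t) := by
  unfold percProb
  rw [sum_comm]
  refine sum_le_sum fun F hF => ?_
  have hw := pow_mul_one_sub_pow_nonneg hp0 hp1 #F (#G.edgeFinset - #F)
  split_ifs with hA
  · obtain ⟨t, ht, hB⟩ := h _ (fromEdgeSet_le_of_subset_edgeFinset G (mem_powerset.1 hF)) hA
    refine le_trans ?_ (single_le_sum (fun t _ => ?_) ht)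
    · rw [if_pos hB]
    · split_ifs <;> simp [hw]
  · exact sum_nonneg fun t _ => by split_ifs <;> simp [hw]

lemma sum_percProb_le_one (hp0 : 0 ≤ p) (hp1 : p ≤ 1) {ι : Type*} (T : Finset ι)
    {B : ι → SimpleGraph V → Prop}
    (h : ∀ H ≤ G, ∀ t ∈ T, ∀ t' ∈ T, B t H → B t' H → t = t') :
    ∑ t ∈ T, percProb G p (B t) ≤ 1 := by
  unfold percProb
  rw [sum_comm]
  have hmass : ∑ F ∈ G.edgeFinset.powerset, p ^ #F * (1 - p) ^ (#G.edgeFinset - #F) = 1 := by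
    rw [sum_pow_mul_eq_add_pow, add_sub_cancel, one_pow]
  refine (sum_le_sum fun F hF => ?_).trans hmass.le
  have hle := fromEdgeSet_le_of_subset_edgeFinset G (mem_powerset.1 hF)
  rw [← sum_filter, sum_const, nsmul_eq_mul]
  refine mul_le_of_le_one_left (pow_mul_one_sub_pow_nonneg hp0 hp1 _ _) ?_
  exact_mod_cast card_le_one.2 fun t ht t' ht' =>
    h _ hle t (mem_filter.1 ht).1 t' (mem_filter.1 ht').1 (mem_filter.1 ht).2 (mem_filter.1 ht').2

lemma filter_powerset_inCylinder_eq_Icc (P B : Finset (Sym2 V)) :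
    G.edgeFinset.powerset.filter (fun F : Finset (Sym2 V) => InCylinder P B (fromEdgeSet ↑F)) =
      Icc P (G.edgeFinset \ B) := by
  ext F
  rw [mem_filter, mem_powerset, mem_Icc, InCylinder]
  constructor
  · rintro ⟨hF, hPF, hFB⟩
    rw [edgeSet_fromEdgeSet_of_subset_edgeFinset G hF, coe_subset] at hPF
    rw [edgeSet_fromEdgeSet_of_subset_edgeFinset G hF, disjoint_coe] at hFB
    exact ⟨hPF, subset_sdiff.2 ⟨hF, hFB⟩⟩
  · rintro ⟨hPF, hFD⟩
    have hF := hFD.trans sdiff_subset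
    rw [edgeSet_fromEdgeSet_of_subset_edgeFinset G hF, coe_subset, disjoint_coe]
    exact ⟨hF, hPF, (subset_sdiff.1 hFD).2⟩

lemma percProb_inCylinder {P B : Finset (Sym2 V)} (hP : P ⊆ G.edgeFinset) (hB : B ⊆ G.edgeFinset)
    (hPB : Disjoint P B) :
    percProb G p (InCylinder P B) = p ^ #P * (1 - p) ^ #B := by
  set D := G.edgeFinset \ B
  have hPD : P ⊆ D := subset_sdiff.2 ⟨hP, hPB⟩
  have hcard : #G.edgeFinset = #(D \ P) + #P + #B := by
    have : #D + #B = #G.edgeFinset := card_sdiff_add_card_eq_card hB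
    have := card_sdiff_add_card_eq_card hPD
    omega
  have hinj : Set.InjOn (P ∪ ·) ↑(D \ P).powerset := fun t ht t' ht' (h : P ∪ t = P ∪ t') => by
    have hdisj : ∀ t ∈ ((D \ P).powerset : Set _), Disjoint P t := fun t ht =>
      disjoint_of_subset_right (mem_powerset.1 ht) disjoint_sdiff
    rw [← union_sdiff_cancel_left (hdisj t ht), h, union_sdiff_cancel_left (hdisj t' ht')]
  unfold percProb
  rw [← sum_filter, filter_powerset_inCylinder_eq_Icc, Icc_eq_image_powerset hPD, sum_image hinj]
  have hterm : ∀ t ∈ (D \ P).powerset, p ^ #(P ∪ t) * (1 - p) ^ (#G.edgeFinset - #(P ∪ t)) =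
      p ^ #P * (1 - p) ^ #B * (p ^ #t * (1 - p) ^ (#(D \ P) - #t)) := by
    intro t ht
    have ht' := mem_powerset.1 ht
    rw [card_union_of_disjoint (disjoint_of_subset_right ht' disjoint_sdiff)]
    have := card_le_card ht'
    rw [show #G.edgeFinset - (#P + #t) = #B + (#(D \ P) - #t) by omega]
    ring
  rw [sum_congr rfl hterm, ← mul_sum, sum_pow_mul_eq_add_pow, add_sub_cancel, one_pow, mul_one]

end Percolation

section Spanning

variable {V : Type*} [Fintype V]

noncomputable def reachFinset (H : SimpleGraph V) (R : Finset V) : Finset V :=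
  {x | ∃ r ∈ R, H.Reachable r x}

structure SpansFrom (P : Finset (Sym2 V)) (R S : Finset V) : Prop where
  roots_subset : R ⊆ S
  mem_of_mem_edge : ∀ e ∈ P, ∀ x ∈ e, x ∈ S
  reachable : ∀ x ∈ S, ∃ r ∈ R, (fromEdgeSet (P : Set (Sym2 V))).Reachable r x

variable {H H' : SimpleGraph V} {R S : Finset V}

lemma mem_reachFinset {x : V} : x ∈ reachFinset H R ↔ ∃ r ∈ R, H.Reachable r x := by
  simp [reachFinset]

lemma subset_reachFinset : R ⊆ reachFinset H R :=
  fun r hr => mem_reachFinset.2 ⟨r, hr, .rfl⟩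

lemma reachFinset_mono (h : H ≤ H') : reachFinset H R ⊆ reachFinset H' R := fun x hx => by
  obtain ⟨r, hr, hrx⟩ := mem_reachFinset.1 hx
  exact mem_reachFinset.2 ⟨r, hr, hrx.mono h⟩

lemma mem_reachFinset_of_adj {a b : V} (ha : a ∈ reachFinset H R) (hab : H.Adj a b) :
    b ∈ reachFinset H R := by
  obtain ⟨r, hr, hra⟩ := mem_reachFinset.1 ha
  exact mem_reachFinset.2 ⟨r, hr, hra.trans hab.reachable⟩

lemma iUnion_supp_connectedComponentMk_eq_reachFinset (H : SimpleGraph V) (U : Set V) :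
    ⋃ u ∈ U, (H.connectedComponentMk u).supp = ↑(reachFinset H U.toFinset) := by
  ext x
  simp [mem_reachFinset, ConnectedComponent.eq, reachable_comm]

lemma reachFinset_subset (hRS : R ⊆ S) (hS : ∀ a ∈ S, ∀ b, H.Adj a b → b ∈ S) :
    reachFinset H R ⊆ S := by
  intro x hx
  obtain ⟨r, hr, ⟨w⟩⟩ := mem_reachFinset.1 hx
  by_contra hxS
  obtain ⟨d, -, hd, hd'⟩ := w.exists_boundary_dart (↑S) (hRS hr) hxS
  exact hd' (hS _ hd _ d.adj)

lemma exists_adj_of_reachFinset_ne (h : H' ≤ H) (hne : reachFinset H' R ≠ reachFinset H R) :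
    ∃ a ∈ reachFinset H' R, ∃ b ∉ reachFinset H' R, H.Adj a b := by
  obtain ⟨x, hxH, hxH'⟩ := not_subset.1 fun h' => hne ((reachFinset_mono h).antisymm h')
  obtain ⟨r, hr, ⟨w⟩⟩ := mem_reachFinset.1 hxH
  obtain ⟨d, -, hd, hd'⟩ :=
    w.exists_boundary_dart (↑(reachFinset H' R)) (subset_reachFinset hr) hxH'
  exact ⟨_, hd, _, hd', d.adj⟩

lemma insert_subset_reachFinset_insert {P : Finset (Sym2 V)} {a b : V}
    (ha : a ∈ reachFinset (fromEdgeSet ↑P) R) (hab : a ≠ b) :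
    insert b (reachFinset (fromEdgeSet ↑P) R) ⊆
      reachFinset (fromEdgeSet (↑(insert s(a, b) P) : Set (Sym2 V))) R := by
  have hle : fromEdgeSet ↑P ≤ fromEdgeSet (↑(insert s(a, b) P) : Set (Sym2 V)) :=
    fromEdgeSet_mono (by simp)
  refine insert_subset (mem_reachFinset_of_adj (reachFinset_mono hle ha) ?_) (reachFinset_mono hle)
  exact (fromEdgeSet_adj _).2 ⟨by simp, hab⟩

lemma exists_spansFrom_reachFinset (H : SimpleGraph V) (R : Finset V) :
    ∃ P ⊆ H.edgeFinset, #P + #R ≤ #(reachFinset H R) ∧ SpansFrom P R (reachFinset H R) := by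
  set S := reachFinset H R
  let T : Finset (Sym2 V) → Finset V := fun P => reachFinset (fromEdgeSet ↑P) R
  let C := H.edgeFinset.powerset.filter fun P => #P + #R ≤ #(T P) ∧ ∀ e ∈ P, ∀ x ∈ e, x ∈ S
  have hC : ∅ ∈ C := by
    simp only [C, mem_filter, mem_powerset, card_empty, zero_add]
    exact ⟨empty_subset _, card_le_card subset_reachFinset, by simp⟩
  obtain ⟨P, hPC, hmax⟩ := exists_max_image C (fun P => #(T P)) ⟨∅, hC⟩
  obtain ⟨hPH, hcard, hPS⟩ := by simpa only [C, mem_filter, mem_powerset] using hPC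
  have hPle : fromEdgeSet ↑P ≤ H := fromEdgeSet_le_of_subset_edgeFinset H hPH
  suffices hTeq : T P = S from
    ⟨P, hPH, hTeq ▸ hcard, hTeq ▸ subset_reachFinset, hPS,
      fun x hx => mem_reachFinset.1 (hTeq.symm ▸ hx : x ∈ T P)⟩
  -- an `H`-edge leaving `T P` could be added to `P`, contradicting maximality
  by_contra hne
  obtain ⟨a, ha, b, hb, hab⟩ := exists_adj_of_reachFinset_ne hPle hne
  have hgrow : #(T P) + 1 ≤ #(T (insert s(a, b) P)) := by
    have := card_le_card (insert_subset_reachFinset_insert ha hab.ne)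
    rwa [card_insert_of_notMem hb] at this
  have hP'C : insert s(a, b) P ∈ C := by
    simp only [C, mem_filter, mem_powerset]
    refine ⟨insert_subset (mem_edgeFinset.2 hab) hPH, ?_, ?_⟩
    · have := card_insert_le s(a, b) P
      omega
    · have haS := reachFinset_mono hPle ha
      simp only [mem_insert, forall_eq_or_imp, Sym2.mem_iff, forall_eq]
      exact ⟨⟨haS, mem_reachFinset_of_adj haS hab⟩, hPS⟩
  have := hmax _ hP'C
  omega

end Spanning

section EdgeCounts

variable {V : Type*} [Fintype V] {G : SimpleGraph V} {d : ℕ} {S : Finset V} {e : Sym2 V}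

noncomputable def boundaryEdges (G : SimpleGraph V) (S : Finset V) : Finset (Sym2 V) :=
  (S.sigma fun a => G.neighborFinset a \ S).image fun z => s(z.1, z.2)

lemma mem_boundaryEdges :
    e ∈ boundaryEdges G S ↔ ∃ a ∈ S, ∃ b ∉ S, G.Adj a b ∧ s(a, b) = e := by
  simp [boundaryEdges, and_assoc, and_left_comm]

lemma boundaryEdges_subset_edgeFinset : boundaryEdges G S ⊆ G.edgeFinset := fun e he => by
  obtain ⟨a, -, b, -, hab, rfl⟩ := mem_boundaryEdges.1 he
  exact mem_edgeFinset.2 hab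

lemma card_mul_sub_le_card_boundaryEdges (hreg : ∀ x, G.degree x = d) :
    #S * (d - #S) ≤ #(boundaryEdges G S) := by
  rw [boundaryEdges, card_image_of_injOn, card_sigma]
  · calc #S * (d - #S) = ∑ _a ∈ S, (d - #S) := by rw [sum_const, smul_eq_mul]
      _ ≤ ∑ a ∈ S, #(G.neighborFinset a \ S) := sum_le_sum fun a _ => by
          simpa [card_neighborFinset_eq_degree, hreg] using le_card_sdiff S (G.neighborFinset a)
  · rintro ⟨a, b⟩ hab ⟨a', b'⟩ hab' h
    simp only [coe_sigma, Set.mem_sigma_iff, mem_coe, mem_sdiff] at hab hab'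
    rcases Sym2.eq_iff.1 h with ⟨rfl, rfl⟩ | ⟨rfl, rfl⟩
    · rfl
    · exact absurd hab'.1 hab.2.2

noncomputable def incidentEdges (G : SimpleGraph V) (S : Finset V) : Finset (Sym2 V) :=
  S.biUnion fun a => G.incidenceFinset a

lemma mem_incidentEdges : e ∈ incidentEdges G S ↔ e ∈ G.edgeSet ∧ ∃ a ∈ S, a ∈ e := by
  simp only [incidentEdges, mem_biUnion, mem_incidenceFinset, incidenceSet]
  exact ⟨fun ⟨a, ha, he, hae⟩ => ⟨he, a, ha, hae⟩, fun ⟨he, a, ha, hae⟩ => ⟨a, ha, he, hae⟩⟩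

lemma card_incidentEdges_le (hreg : ∀ x, G.degree x = d) : #(incidentEdges G S) ≤ #S * d :=
  card_biUnion_le.trans (by simp [card_incidenceFinset_eq_degree, hreg])

end EdgeCounts

section Witnesses

variable {V : Type} [Fintype V] {G H : SimpleGraph V} {d : ℕ} {p : ℝ} {R S : Finset V}
  {P : Finset (Sym2 V)} {s ℓ : ℕ}

lemma incidentEdges_subset_edgeFinset : incidentEdges G S ⊆ G.edgeFinset := fun _ he =>
  mem_edgeFinset.2 (mem_incidentEdges.1 he).1

lemma SpansFrom.disjoint_boundaryEdges (hP : SpansFrom P R S) :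
    Disjoint P (boundaryEdges G S) := by
  refine disjoint_right.2 fun e he heP => ?_
  obtain ⟨a, -, b, hb, -, rfl⟩ := mem_boundaryEdges.1 he
  exact hb (hP.mem_of_mem_edge _ heP b (Sym2.mem_mk_right a b))

lemma SpansFrom.eq_of_inCylinder (hP : SpansFrom P R S) (hH : H ≤ G)
    (hcyl : InCylinder P (incidentEdges G S \ P) H) :
    S = reachFinset H R ∧ P = {e ∈ incidentEdges G S | e ∈ H.edgeSet} := by
  have hHP : ∀ e ∈ H.edgeSet, ∀ a ∈ S, a ∈ e → e ∈ P := fun e he a ha hae => by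
    by_contra heP
    refine Set.disjoint_left.1 hcyl.2 he (mem_coe.2 (mem_sdiff.2 ⟨?_, heP⟩))
    exact mem_incidentEdges.2 ⟨edgeSet_mono hH he, a, ha, hae⟩
  refine ⟨subset_antisymm (fun x hx => ?_) ?_, ?_⟩
  · obtain ⟨r, hr, hrx⟩ := hP.reachable x hx
    exact mem_reachFinset.2 ⟨r, hr, hrx.mono ((fromEdgeSet_le _).2 fun e he => hcyl.1 he.1)⟩
  · exact reachFinset_subset hP.roots_subset fun a ha b hab =>
      hP.mem_of_mem_edge _ (hHP _ hab a ha (Sym2.mem_mk_left a b)) b (Sym2.mem_mk_right a b)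
  · ext e
    rw [mem_filter, mem_incidentEdges]
    refine ⟨fun he => ⟨⟨edgeSet_mono hH (hcyl.1 he), ?_⟩, hcyl.1 he⟩,
      fun ⟨⟨_, a, ha, hae⟩, he⟩ => hHP e he a ha hae⟩
    induction e using Sym2.ind with
    | _ a b => exact ⟨a, hP.mem_of_mem_edge _ he a (Sym2.mem_mk_left a b), Sym2.mem_mk_left a b⟩

noncomputable def spanningPairs (G : SimpleGraph V) (R : Finset V) (s ℓ : ℕ) :
    Finset (Finset V × Finset (Sym2 V)) :=
  {w ∈ univ ×ˢ G.edgeFinset.powerset | #w.1 = s ∧ #w.2 = ℓ ∧ SpansFrom w.2 R w.1}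

lemma mem_spanningPairs {w : Finset V × Finset (Sym2 V)} :
    w ∈ spanningPairs G R s ℓ ↔ w.2 ⊆ G.edgeFinset ∧ #w.1 = s ∧ #w.2 = ℓ ∧ SpansFrom w.2 R w.1 := by
  simp [spanningPairs]

lemma card_spanningPairs_mul_le_one {q : ℝ} (hq0 : 0 ≤ q) (hq1 : q ≤ 1)
    (hreg : ∀ x, G.degree x = d) (R : Finset V) (s ℓ : ℕ) :
    #(spanningPairs G R s ℓ) * (q ^ ℓ * (1 - q) ^ (s * d)) ≤ 1 := by
  set W := spanningPairs G R s ℓ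
  calc (#W : ℝ) * (q ^ ℓ * (1 - q) ^ (s * d)) = ∑ _w ∈ W, q ^ ℓ * (1 - q) ^ (s * d) := by
        rw [sum_const, nsmul_eq_mul]
    _ ≤ ∑ w ∈ W, percProb G q (InCylinder w.2 (incidentEdges G w.1 \ w.2)) :=
        sum_le_sum fun w hw => ?_
    _ ≤ 1 := sum_percProb_le_one hq0 hq1 W fun H hH w hw w' hw' h h' => ?_
  · obtain ⟨hPG, rfl, rfl, -⟩ := mem_spanningPairs.1 hw
    rw [percProb_inCylinder hPG (sdiff_subset.trans incidentEdges_subset_edgeFinset)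
      disjoint_sdiff]
    exact mul_le_mul_of_nonneg_left (pow_le_pow_of_le_one (by linarith) (by linarith)
      ((card_le_card sdiff_subset).trans (card_incidentEdges_le hreg))) (by positivity)
  · obtain ⟨hS, hP⟩ := (mem_spanningPairs.1 hw).2.2.2.eq_of_inCylinder hH h
    obtain ⟨hS', hP'⟩ := (mem_spanningPairs.1 hw').2.2.2.eq_of_inCylinder hH h'
    rw [← hS'] at hS
    exact Prod.ext hS (by rw [hP, hP', hS])

lemma percProb_exists_spanningPairs_le (hp0 : 0 ≤ p) (hp1 : p ≤ 1)
    (hreg : ∀ x, G.degree x = d) (R : Finset V) (s ℓ : ℕ) :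
    percProb G p (fun H => ∃ w ∈ spanningPairs G R s ℓ, InCylinder w.2 (boundaryEdges G w.1) H)
      ≤ #(spanningPairs G R s ℓ) * (p ^ ℓ * (1 - p) ^ (s * (d - s))) := by
  set W := spanningPairs G R s ℓ
  calc _ ≤ ∑ w ∈ W, percProb G p (InCylinder w.2 (boundaryEdges G w.1)) :=
        percProb_le_sum hp0 hp1 W fun _ _ h => h
    _ ≤ ∑ _w ∈ W, p ^ ℓ * (1 - p) ^ (s * (d - s)) := sum_le_sum fun w hw => ?_
    _ = _ := by rw [sum_const, nsmul_eq_mul]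
  obtain ⟨hPG, rfl, rfl, hP⟩ := mem_spanningPairs.1 hw
  rw [percProb_inCylinder hPG boundaryEdges_subset_edgeFinset hP.disjoint_boundaryEdges]
  exact mul_le_mul_of_nonneg_left (pow_le_pow_of_le_one (by linarith) (by linarith)
    (card_mul_sub_le_card_boundaryEdges hreg)) (by positivity)

lemma exists_spanningPairs_inCylinder (hH : H ≤ G) (R : Finset V) :
    ∃ P, (reachFinset H R, P) ∈ spanningPairs G R #(reachFinset H R) #P ∧
      #P ≤ #(reachFinset H R) ∧ InCylinder P (boundaryEdges G (reachFinset H R)) H := by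
  obtain ⟨P, hPH, hcard, hP⟩ := exists_spansFrom_reachFinset H R
  refine ⟨P, mem_spanningPairs.2 ⟨hPH.trans (edgeFinset_mono hH), rfl, rfl, hP⟩, by omega,
    fun e he => mem_edgeFinset.1 (hPH he), Set.disjoint_right.2 fun e he heH => ?_⟩
  obtain ⟨a, ha, b, hb, -, rfl⟩ := mem_boundaryEdges.1 he
  exact hb (mem_reachFinset_of_adj ha heH)

end Witnesses

section Neighbourhood

variable {V : Type} [Fintype V] {G : SimpleGraph V} {d : ℕ} {p : ℝ}

theorem percProb_neighbourhood_components_le (hreg : ∀ x, G.degree x = d) (v : V)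
    (hp0 : 0 ≤ p) (hp1 : p ≤ 1) {q c m a b : ℝ} (hq0 : 0 ≤ q) (hq1 : q ≤ 1) (hc : 0 ≤ c)
    (hb : b ≤ d) (hpq : ∀ s ℓ : ℕ, a ≤ s → (s : ℝ) ≤ b → ℓ ≤ s →
      p ^ ℓ * (1 - p) ^ (s * (d - s)) ≤ c * (q ^ ℓ * (1 - q) ^ (s * d))) :
    percProb G p (fun H => ∃ U : Set V, U ⊆ G.neighborSet v ∧ (U.ncard : ℝ) ≤ m ∧
        a ≤ ((⋃ u ∈ U, (H.connectedComponentMk u).supp).ncard : ℝ) ∧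
        ((⋃ u ∈ U, (H.connectedComponentMk u).supp).ncard : ℝ) ≤ b) ≤
      #{R ∈ (G.neighborFinset v).powerset | (#R : ℝ) ≤ m} * (d + 1) ^ 2 * c := by
  set Ks := {R ∈ (G.neighborFinset v).powerset | (#R : ℝ) ≤ m}
  set K := {k ∈ Ks ×ˢ range (d + 1) ×ˢ range (d + 1) |
    a ≤ k.2.1 ∧ (k.2.1 : ℝ) ≤ b ∧ k.2.2 ≤ k.2.1}
  have hK : (#K : ℝ) ≤ #Ks * (d + 1) ^ 2 := by
    have := card_filter_le (Ks ×ˢ range (d + 1) ×ˢ range (d + 1))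
      fun k => a ≤ k.2.1 ∧ (k.2.1 : ℝ) ≤ b ∧ k.2.2 ≤ k.2.1
    rw [card_product, card_product, card_range] at this
    exact_mod_cast this.trans_eq (by ring)
  calc _ ≤ ∑ k ∈ K, percProb G p (fun H => ∃ w ∈ spanningPairs G k.1 k.2.1 k.2.2,
          InCylinder w.2 (boundaryEdges G w.1) H) :=
        percProb_le_sum hp0 hp1 K fun H hH hA => ?_
    _ ≤ ∑ _k ∈ K, c := sum_le_sum fun k hk => ?_
    _ ≤ _ := by rw [sum_const, nsmul_eq_mul]; gcongr
  · obtain ⟨U, hUv, hUm, haS, hSb⟩ := hA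
    rw [iUnion_supp_connectedComponentMk_eq_reachFinset, Set.ncard_coe_finset] at haS hSb
    obtain ⟨P, hw, hPS, hcyl⟩ := exists_spanningPairs_inCylinder hH U.toFinset
    have hSd : #(reachFinset H U.toFinset) ≤ d := by exact_mod_cast hSb.trans hb
    refine ⟨(U.toFinset, _, #P), mem_filter.2 ⟨?_, haS, hSb, hPS⟩, _, hw, hcyl⟩
    simp only [Ks, mem_product, mem_filter, mem_powerset, mem_range]
    refine ⟨⟨fun x hx => ?_, ?_⟩, Nat.lt_succ_of_le hSd, Nat.lt_succ_of_le (hPS.trans hSd)⟩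
    · simpa using hUv (Set.mem_toFinset.1 hx)
    · rwa [← Set.ncard_eq_toFinset_card']
  · obtain ⟨-, ha, hb, hℓ⟩ := mem_filter.1 hk
    set W := spanningPairs G k.1 k.2.1 k.2.2
    calc _ ≤ #W * (p ^ k.2.2 * (1 - p) ^ (k.2.1 * (d - k.2.1))) :=
          percProb_exists_spanningPairs_le hp0 hp1 hreg _ _ _
      _ ≤ #W * (c * (q ^ k.2.2 * (1 - q) ^ (k.2.1 * d))) :=
          mul_le_mul_of_nonneg_left (hpq _ _ ha hb hℓ) (Nat.cast_nonneg _)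
      _ = c * (#W * (q ^ k.2.2 * (1 - q) ^ (k.2.1 * d))) := by ring
      _ ≤ c := mul_le_of_le_one_right hc (card_spanningPairs_mul_le_one hq0 hq1 hreg _ _ _)

end Neighbourhood

section Estimates

open Real

lemma one_add_le_exp_sub_sq_div_four {x : ℝ} (h0 : 0 ≤ x) (h1 : x ≤ 1) :
    1 + x ≤ exp (x - x ^ 2 / 4) := by
  have := quadratic_le_exp_of_nonneg (show 0 ≤ x - x ^ 2 / 4 by nlinarith)
  nlinarith

lemma one_sub_pow_le_exp_neg_mul {p : ℝ} (hp : p ≤ 1) (n : ℕ) : (1 - p) ^ n ≤ exp (-(p * n)) :=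
  calc (1 - p) ^ n ≤ exp (-p) ^ n := pow_le_pow_left₀ (by linarith) (one_sub_le_exp_neg p) n
    _ = exp (-(p * n)) := by rw [← exp_nat_mul]; ring_nf

lemma exp_neg_div_sub_one_le_one_sub_inv_pow {y : ℝ} (hy : 1 < y) (n : ℕ) :
    exp (-(n / (y - 1))) ≤ (1 - 1 / y) ^ n := by
  have hy1 : 0 < y - 1 := by linarith
  have h : exp (-(1 / (y - 1))) ≤ 1 - 1 / y := by
    rw [exp_neg]
    calc (exp (1 / (y - 1)))⁻¹ ≤ (1 / (y - 1) + 1)⁻¹ :=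
          inv_anti₀ (by positivity) (add_one_le_exp _)
      _ = 1 - 1 / y := by field_simp; ring
  calc exp (-(n / (y - 1))) = exp (-(1 / (y - 1))) ^ n := by rw [← exp_nat_mul]; ring_nf
    _ ≤ (1 - 1 / y) ^ n := pow_le_pow_left₀ (exp_nonneg _) h n

lemma pow_le_one_div_pow_mul_exp {d s ℓ : ℕ} {ε p : ℝ} (hε0 : 0 ≤ ε) (hε1 : ε ≤ 1)
    (hℓs : ℓ ≤ s) (hp0 : 0 ≤ p) (hp : p ≤ (1 + ε) / d) :
    p ^ ℓ ≤ (1 / d) ^ ℓ * exp ((ε - ε ^ 2 / 4) * s) :=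
  calc p ^ ℓ ≤ ((1 + ε) / d) ^ ℓ := pow_le_pow_left₀ hp0 hp ℓ
    _ = (1 / d) ^ ℓ * (1 + ε) ^ ℓ := by rw [← mul_pow]; ring
    _ ≤ (1 / d) ^ ℓ * exp (ε - ε ^ 2 / 4) ^ s := by
        gcongr
        exact (pow_le_pow_right₀ (by linarith) hℓs).trans
          (pow_le_pow_left₀ (by linarith) (one_add_le_exp_sub_sq_div_four hε0 hε1) s)
    _ = (1 / d) ^ ℓ * exp ((ε - ε ^ 2 / 4) * s) := by rw [← exp_nat_mul, mul_comm (s : ℝ)]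

lemma pow_mul_one_sub_pow_le {d s ℓ : ℕ} {ε δ p : ℝ} (hε0 : 0 < ε) (hε1 : ε ≤ 1) (hδ0 : 0 ≤ δ)
    (hδε : 48 * δ ≤ ε ^ 2) (hd : 17 / ε ^ 2 < d) (hs₁ : δ * d ≤ s) (hs₂ : s ≤ 2 * δ * d)
    (hℓs : ℓ ≤ s) (hp₁ : (1 + ε - 2 * δ) / d ≤ p) (hp₂ : p ≤ (1 + ε) / d) :
    p ^ ℓ * (1 - p) ^ (s * (d - s)) ≤
      exp (-(ε ^ 2 * δ * d / 16)) * ((1 / d) ^ ℓ * (1 - 1 / d) ^ (s * d)) := by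
  have hε2 : ε ^ 2 ≤ 1 := by nlinarith
  have hd16 : 16 ≤ ε ^ 2 * (d - 1) := by
    have := (div_lt_iff₀ (by positivity)).1 hd
    nlinarith
  have hd1 : (1 : ℝ) < d := by nlinarith
  have hd0 : (0 : ℝ) < d := by linarith
  have hp0 : 0 ≤ p := le_trans (div_nonneg (by linarith) hd0.le) hp₁
  have hp1 : p ≤ 1 := hp₂.trans ((div_le_one hd0).2 (by nlinarith))
  have hsd : (s : ℝ) ≤ d := by nlinarith
  have hs0 : (0 : ℝ) ≤ s := Nat.cast_nonneg s
  have hclosed : (1 - p) ^ (s * (d - s)) ≤ exp (-((1 + ε - 2 * δ) * (1 - 2 * δ) * s)) := by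
    refine (one_sub_pow_le_exp_neg_mul hp1 _).trans (exp_le_exp.2 (neg_le_neg ?_))
    rw [Nat.cast_mul, Nat.cast_sub (by exact_mod_cast hsd)]
    calc (1 + ε - 2 * δ) * (1 - 2 * δ) * s = (1 + ε - 2 * δ) / d * (s * (d * (1 - 2 * δ))) := by
          field_simp
      _ ≤ p * (s * (d - s)) := mul_le_mul hp₁ (by nlinarith)
            (mul_nonneg hs0 (mul_nonneg hd0.le (by linarith))) hp0
  have hfree := exp_neg_div_sub_one_le_one_sub_inv_pow hd1 (s * d)
  have hexponent : (ε - ε ^ 2 / 4) * s - (1 + ε - 2 * δ) * (1 - 2 * δ) * s ≤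
      -(ε ^ 2 * δ * d / 16) - ↑(s * d) / (d - 1) := by
    have ht : ↑(s * d) / (d - 1) ≤ s * (1 + ε ^ 2 / 16) := by
      rw [div_le_iff₀ (by linarith), Nat.cast_mul]
      nlinarith
    nlinarith [mul_le_mul_of_nonneg_left hs₁ (sq_nonneg ε), mul_nonneg hs0 hδ0,
      mul_nonneg (mul_nonneg hs0 hδ0) (sub_nonneg.2 hε1), mul_nonneg hs0 (sq_nonneg δ)]
  calc p ^ ℓ * (1 - p) ^ (s * (d - s))
      ≤ (1 / d) ^ ℓ * exp ((ε - ε ^ 2 / 4) * s) * exp (-((1 + ε - 2 * δ) * (1 - 2 * δ) * s)) :=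
        mul_le_mul (pow_le_one_div_pow_mul_exp hε0.le hε1 hℓs hp0 hp₂) hclosed (by positivity)
          (by positivity)
    _ ≤ (1 / d) ^ ℓ * exp (-(ε ^ 2 * δ * d / 16) - ↑(s * d) / (d - 1)) := by
        rw [mul_assoc, ← exp_add, ← sub_eq_add_neg]
        exact mul_le_mul_of_nonneg_left (exp_le_exp.2 hexponent) (by positivity)
    _ ≤ exp (-(ε ^ 2 * δ * d / 16)) * ((1 / d) ^ ℓ * (1 - 1 / d) ^ (s * d)) := by
        rw [sub_eq_add_neg, exp_add, mul_left_comm]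
        exact mul_le_mul_of_nonneg_left (mul_le_mul_of_nonneg_left hfree (by positivity))
          (by positivity)

lemma card_filter_card_le_mul_pow_le {α : Type*} (N : Finset α) {x m : ℝ} (hx0 : 0 ≤ x)
    (hx1 : x ≤ 1) : #{R ∈ N.powerset | (#R : ℝ) ≤ m} * x ^ ⌊m⌋₊ ≤ (1 + x) ^ #N := by
  calc #{R ∈ N.powerset | (#R : ℝ) ≤ m} * x ^ ⌊m⌋₊
      = ∑ R ∈ N.powerset with (#R : ℝ) ≤ m, x ^ ⌊m⌋₊ := by rw [sum_const, nsmul_eq_mul]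
    _ ≤ ∑ R ∈ N.powerset with (#R : ℝ) ≤ m, x ^ #R :=
        sum_le_sum fun R hR => pow_le_pow_of_le_one hx0 hx1 (Nat.le_floor (mem_filter.1 hR).2)
    _ ≤ ∑ R ∈ N.powerset, x ^ #R :=
        sum_le_sum_of_subset_of_nonneg (filter_subset _ _) fun _ _ _ => by positivity
    _ = (1 + x) ^ #N := by
        simpa [add_comm] using sum_pow_mul_eq_add_pow x 1 N

lemma exp_neg_div_le_pow {r : ℝ} (hr : 0 < r) (n : ℕ) : exp (-(n / r)) ≤ r ^ n := by
  have h : exp (-(1 / r)) ≤ r := by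
    rw [exp_neg]
    calc (exp (1 / r))⁻¹ ≤ (1 / r)⁻¹ :=
          inv_anti₀ (by positivity) (by linarith [add_one_le_exp (1 / r)])
      _ = r := by rw [one_div, inv_inv]
  calc exp (-(n / r)) = exp (-(1 / r)) ^ n := by rw [← exp_nat_mul]; ring_nf
    _ ≤ r ^ n := pow_le_pow_left₀ (exp_nonneg _) h n

lemma le_exp_of_mul_sq_pow_le {C δ : ℝ} {d M : ℕ} (hδ0 : 0 < δ)
    (hC : C * (δ ^ 2) ^ M ≤ (1 + δ ^ 2) ^ d) : C ≤ exp (δ ^ 2 * d + 4 * M / √δ) := by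
  rcases le_or_gt C 0 with hC0 | hC0
  · exact hC0.trans (exp_pos _).le
  have h1 : exp (-(↑(4 * M) / √δ)) ≤ (δ ^ 2) ^ M := by
    have : (δ ^ 2) ^ M = √δ ^ (4 * M) := by
      rw [pow_mul, show 4 = 2 * 2 from rfl, pow_mul, sq_sqrt hδ0.le]
    exact this ▸ exp_neg_div_le_pow (sqrt_pos.2 hδ0) _
  have h2 : (1 + δ ^ 2) ^ d ≤ exp (δ ^ 2 * d) := by
    rw [mul_comm, exp_nat_mul]
    exact pow_le_pow_left₀ (by positivity) (by linarith [add_one_le_exp (δ ^ 2)]) d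
  rw [← sub_neg_eq_add, exp_sub, le_div_iff₀ (exp_pos _)]
  push_cast at h1
  exact (mul_le_mul_of_nonneg_left h1 hC0.le).trans (hC.trans h2)

lemma add_one_sq_le_exp {K x : ℝ} (hK : 0 ≤ K) (hx : 1 ≤ x) (h : 24 ≤ K ^ 3 * x) :
    (x + 1) ^ 2 ≤ exp (K * x) := by
  have := pow_div_factorial_le_exp (K * x) (by positivity) 3
  rw [show Nat.factorial 3 = 6 by rfl] at this
  nlinarith [mul_le_mul_of_nonneg_right h (sq_nonneg x)]

lemma mul_add_one_sq_mul_exp_le {C ε δ : ℝ} {d : ℕ} (hε0 : 0 < ε) (hε1 : ε ≤ 1) (hδ0 : 0 < δ)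
    (hδ : δ ≤ ε ^ 4 / 10 ^ 6) (hd : 24 * (64 / (ε ^ 2 * δ)) ^ 3 ≤ d)
    (hC : C * (δ ^ 2) ^ ⌊δ ^ 2 * d⌋₊ ≤ (1 + δ ^ 2) ^ d) :
    C * (d + 1) ^ 2 * exp (-(ε ^ 2 * δ * d / 16)) ≤ exp (-(δ ^ 2 * d)) := by
  -- `(δ²) ^ (-δ² d) ≤ exp (4 δ √δ d)` is small against `exp (ε² δ d)` because `√δ ≤ ε² / 1000`
  set r := √δ
  set M := ⌊δ ^ 2 * d⌋₊
  have hr0 : 0 < r := sqrt_pos.2 hδ0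
  have hrδ : r ^ 2 = δ := sq_sqrt hδ0.le
  have hr : r ≤ ε ^ 2 / 1000 := by
    rw [show ε ^ 2 / 1000 = √((ε ^ 2 / 1000) ^ 2) from (sqrt_sq (by positivity)).symm]
    exact sqrt_le_sqrt (by linarith)
  have hd24 : 24 ≤ (ε ^ 2 * δ / 64) ^ 3 * d :=
    calc (24 : ℝ) = (ε ^ 2 * δ / 64) ^ 3 * (24 * (64 / (ε ^ 2 * δ)) ^ 3) := by field_simp
      _ ≤ (ε ^ 2 * δ / 64) ^ 3 * d := by gcongr
  have hd1 : (1 : ℝ) ≤ d := by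
    rcases Nat.eq_zero_or_pos d with rfl | hd0
    · norm_num at hd24
    · exact_mod_cast hd0
  have hMr : 4 * M / r ≤ 4 * r ^ 3 * d := by
    have : r ^ 4 = δ ^ 2 := by rw [← hrδ]; ring
    rw [div_le_iff₀ hr0]
    nlinarith [Nat.floor_le (by positivity : 0 ≤ δ ^ 2 * d)]
  have hexp : δ ^ 2 * d + 4 * r ^ 3 * d + ε ^ 2 * δ / 64 * d - ε ^ 2 * δ * d / 16 ≤
      -(δ ^ 2 * d) := by
    have hr' : 2 * r ^ 2 + 4 * r ≤ 3 * ε ^ 2 / 64 := by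
      have : ε ^ 2 ≤ 1 := by nlinarith
      nlinarith [mul_le_mul_of_nonneg_left hr hr0.le]
    rw [← hrδ]
    nlinarith [mul_le_mul_of_nonneg_right hr' (by positivity : (0 : ℝ) ≤ r ^ 2 * d)]
  calc C * (d + 1) ^ 2 * exp (-(ε ^ 2 * δ * d / 16))
      ≤ exp (δ ^ 2 * d + 4 * r ^ 3 * d) * exp (ε ^ 2 * δ / 64 * d) *
          exp (-(ε ^ 2 * δ * d / 16)) := by
        gcongr
        · exact (le_exp_of_mul_sq_pow_le hδ0 hC).trans (exp_le_exp.2 (by linarith))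
        · exact add_one_sq_le_exp (by positivity) hd1 hd24
    _ ≤ exp (-(δ ^ 2 * d)) := by
        rw [← exp_add, ← exp_add]
        exact exp_le_exp.2 (by linarith)

end Estimates

theorem neighbourhood_union_of_components_bound :
    ∃ ε₀ : ℝ, 0 < ε₀ ∧ ∀ ε : ℝ, 0 < ε → ε < ε₀ →
      ∃ δ₀ : ℝ, 0 < δ₀ ∧ ∀ δ : ℝ, 0 < δ → δ < δ₀ →
        ∃ d₀ : ℕ, ∀ d : ℕ, d₀ ≤ d →
          ∀ (V : Type) [Fintype V] (G : SimpleGraph V),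
            -- `G` is `d`-regular
            (∀ v : V, (G.neighborSet v).ncard = d) →
            ∀ v : V, ∀ p : ℝ, (1 + ε - 2 * δ) / (d : ℝ) ≤ p → p ≤ (1 + ε) / (d : ℝ) →
              percProb G p (fun H =>
                ∃ U : Set V, U ⊆ G.neighborSet v ∧ (U.ncard : ℝ) ≤ δ ^ 2 * (d : ℝ) ∧
                  δ * (d : ℝ) ≤
                    (((⋃ u ∈ U, (H.connectedComponentMk u).supp)).ncard : ℝ) ∧
                  (((⋃ u ∈ U, (H.connectedComponentMk u).supp)).ncard : ℝ) ≤
                    2 * δ * (d : ℝ)) ≤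
                Real.exp (-(δ ^ 2 * (d : ℝ))) := by
  refine ⟨1 / 10, by norm_num, fun ε hε0 hε => ⟨ε ^ 4 / 10 ^ 6, by positivity, fun δ hδ0 hδ =>
    ⟨⌈17 / ε ^ 2 + 24 * (64 / (ε ^ 2 * δ)) ^ 3⌉₊ + 1, fun d hd V _ G hreg v p hp₁ hp₂ => ?_⟩⟩⟩
  have hdR : 17 / ε ^ 2 + 24 * (64 / (ε ^ 2 * δ)) ^ 3 < d := Nat.lt_of_ceil_lt hd
  have h24 : 0 ≤ 24 * (64 / (ε ^ 2 * δ)) ^ 3 := by positivity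
  have hε2 : ε ^ 2 ≤ 1 / 100 := by nlinarith
  have h17 : 17 ≤ 17 / ε ^ 2 := by rw [le_div_iff₀ (by positivity)]; nlinarith
  have hδε : 48 * δ ≤ ε ^ 2 := by nlinarith [pow_le_pow_left₀ (sq_nonneg ε) hε2 2]
  have hd0 : (0 : ℝ) < d := by linarith
  have hp0 : 0 ≤ p := le_trans (div_nonneg (by nlinarith) hd0.le) hp₁
  have hp1 : p ≤ 1 := hp₂.trans ((div_le_one hd0).2 (by nlinarith))
  have hdeg : ∀ x, G.degree x = d := fun x => by
    rw [← hreg x, Set.ncard_eq_toFinset_card', Set.toFinset_card, card_neighborSet_eq_degree]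
  have hcount := card_filter_card_le_mul_pow_le (G.neighborFinset v) (m := δ ^ 2 * d)
    (sq_nonneg δ) (by nlinarith)
  rw [card_neighborFinset_eq_degree, hdeg] at hcount
  calc _ ≤ #{R ∈ (G.neighborFinset v).powerset | (#R : ℝ) ≤ δ ^ 2 * d} * (d + 1) ^ 2 *
        Real.exp (-(ε ^ 2 * δ * d / 16)) :=
      percProb_neighbourhood_components_le hdeg v hp0 hp1 (by positivity)
        ((div_le_one hd0).2 (by linarith)) (Real.exp_pos _).le (by nlinarith)
        fun s ℓ h₁ h₂ h₃ => pow_mul_one_sub_pow_le hε0 (by linarith) hδ0.le hδε (by linarith)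
          h₁ h₂ h₃ hp₁ hp₂
    _ ≤ Real.exp (-(δ ^ 2 * d)) :=
      mul_add_one_sq_mul_exp_le hε0 (by linarith) hδ0 hδ.le (by linarith) hcount
end

section
/- For ε > 0 let y(ε) denote the unique solution in (0,1) of y = 1 − exp(−(1+ε)y). Then the function ε ↦ y(ε) is strictly increasing on (0,∞), and there exist ε₀ > 0 and K > 0 such that for every ε ∈ (0, ε₀) one has |y(ε) − 2ε| ≤ K·ε². -/
/-!
Taking logarithms, the fixed-point equation reads `-log (1 - y) / y = 1 + ε`. The left side is
the power series `∑ yⁿ / (n + 1)` with positive coefficients, hence strictly increasing on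
`(0, 1)`, which gives the monotonicity. Its first two terms `1 + y / 2` with the tail bounded by
`y² / (1 - y)` give `y ≤ 2 ε` and `2 ε - y ≤ 2 y² / (1 - y) = O(ε²)`.
-/

open Real Finset

lemma hasSum_pow_div_succ_neg_log_one_sub_div {t : ℝ} (h : |t| < 1) (ht : t ≠ 0) :
    HasSum (fun n : ℕ => t ^ n / (n + 1)) (-log (1 - t) / t) := by
  have hterm (n : ℕ) : t ^ (n + 1) / (n + 1) / t = t ^ n / (n + 1) := by
    rw [pow_succ]; field_simp
  simpa only [hterm] using (hasSum_pow_div_log_of_abs_lt_one h).div_const t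

lemma strictMonoOn_neg_log_one_sub_div :
    StrictMonoOn (fun t => -log (1 - t) / t) (Set.Ioo 0 1) := by
  rintro s ⟨hs0, hs1⟩ t ⟨ht0, ht1⟩ hst
  have habs {u : ℝ} (h0 : 0 < u) (h1 : u < 1) : |u| < 1 := by rwa [abs_of_pos h0]
  refine hasSum_lt (i := 1) (fun n => ?_) (by simp only [pow_one]; gcongr)
    (hasSum_pow_div_succ_neg_log_one_sub_div (habs hs0 hs1) hs0.ne')
    (hasSum_pow_div_succ_neg_log_one_sub_div (habs ht0 ht1) ht0.ne')
  dsimp only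
  gcongr

lemma add_sq_div_two_le_neg_log_one_sub {x : ℝ} (h0 : 0 ≤ x) (h1 : x < 1) :
    x + x ^ 2 / 2 ≤ -log (1 - x) := by
  have := sum_le_hasSum (range 2) (fun n _ => by positivity)
    (hasSum_pow_div_log_of_abs_lt_one (by rwa [abs_of_nonneg h0]))
  norm_num [sum_range_succ] at this
  linarith

lemma neg_log_one_sub_le {x : ℝ} (h0 : 0 ≤ x) (h1 : x < 1) :
    -log (1 - x) ≤ x + x ^ 2 / 2 + x ^ 3 / (1 - x) := by
  have := abs_le.1 (abs_log_sub_add_sum_range_le (by rwa [abs_of_nonneg h0]) 2)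
  norm_num [sum_range_succ, abs_of_nonneg h0] at this
  linarith

lemma neg_log_one_sub_eq_of_eq_one_sub_exp {c y : ℝ} (h : y = 1 - exp (-c * y)) :
    -log (1 - y) = c * y := by
  rw [show 1 - y = exp (-c * y) by linarith, log_exp]
  ring

lemma abs_sub_two_mul_le_of_neg_log_one_sub_eq {ε y : ℝ} (hε : ε < 1 / 4) (h0 : 0 < y)
    (h1 : y < 1) (h : -log (1 - y) = (1 + ε) * y) : |y - 2 * ε| ≤ 16 * ε ^ 2 := by
  have hle : y ≤ 2 * ε := by
    nlinarith [add_sq_div_two_le_neg_log_one_sub h0.le h1]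
  have hge : 2 * ε - y ≤ 2 * y ^ 2 / (1 - y) := by
    have key : y * (2 * ε - y) ≤ y * (2 * y ^ 2 / (1 - y)) := by
      have : y * (2 * y ^ 2 / (1 - y)) = 2 * (y ^ 3 / (1 - y)) := by ring
      linarith [neg_log_one_sub_le h0.le h1]
    exact le_of_mul_le_mul_left key h0
  have : 2 * y ^ 2 / (1 - y) ≤ 16 * ε ^ 2 := by
    rw [div_le_iff₀ (by linarith)]
    nlinarith
  rw [abs_le]
  constructor <;> nlinarith

theorem survival_probability_monotone_and_asymptotics (y : ℝ → ℝ)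
    -- `y ε` is the unique solution in `(0,1)` of `y = 1 - exp (-(1+ε) y)`
    (hy : ∀ ε : ℝ, 0 < ε →
      0 < y ε ∧ y ε < 1 ∧ y ε = 1 - Real.exp (-(1 + ε) * y ε)) :
    StrictMonoOn y (Set.Ioi (0 : ℝ)) ∧
      ∃ ε₀ : ℝ, 0 < ε₀ ∧ ∃ K : ℝ, 0 < K ∧
        ∀ ε : ℝ, 0 < ε → ε < ε₀ → |y ε - 2 * ε| ≤ K * ε ^ 2 := by
  have hlog (ε : ℝ) (hε : 0 < ε) : -log (1 - y ε) = (1 + ε) * y ε :=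
    neg_log_one_sub_eq_of_eq_one_sub_exp (hy ε hε).2.2
  refine ⟨fun a ha b hb hab => ?_, 1 / 4, by norm_num, 16, by norm_num, fun ε hε hε₀ =>
    abs_sub_two_mul_le_of_neg_log_one_sub_eq hε₀ (hy ε hε).1 (hy ε hε).2.1 (hlog ε hε)⟩
  obtain ⟨ha0, ha1, -⟩ := hy a ha
  obtain ⟨hb0, hb1, -⟩ := hy b hb
  rw [← strictMonoOn_neg_log_one_sub_div.lt_iff_lt ⟨ha0, ha1⟩ ⟨hb0, hb1⟩]
  simp only [hlog a ha, hlog b hb, mul_div_cancel_right₀ _ ha0.ne', mul_div_cancel_right₀ _ hb0.ne']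
  linarith
end
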